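/- arXiv:1301.2102 — 3 statements merged into one kernel-verified Lean document; each statement's English description precedes it below -/
import Mathlib

section
/- Let A be a symmetric n×n real matrix, let U be an n×(j+p) real matrix with orthonormal columns, let U_j consist of the first j columns of U, and suppose H̄ is a (j+p)×j real matrix with A U_j = U H̄ whose lower bandwidth is p, i.e. H̄_{i,ℓ} = 0 whenever i > ℓ + p. Then the square matrix H_j formed by the first j rows of H̄ is symmetric, and H̄ also has upper bandwidth p, i.e. H̄_{i,ℓ} = 0 whenever ℓ > i + p. -/
open Matrix

/-- If `A` is symmetric, `U` has orthonormal columns and `A U_j = U H̄` where `H̄` has lower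
bandwidth `p`, then the square matrix `H_j` formed by the first `j` rows of `H̄` is symmetric
and `H̄` also has upper bandwidth `p`. -/
theorem banded_lanczos_symmetry {n j p : ℕ} (A : Matrix (Fin n) (Fin n) ℝ)
    (hA : Aᵀ = A) (U : Matrix (Fin n) (Fin (j + p)) ℝ) (hU : Uᵀ * U = 1)
    (H : Matrix (Fin (j + p)) (Fin j) ℝ)
    (hH : A * U.submatrix id (Fin.castAdd p) = U * H)
    (hband : ∀ (i : Fin (j + p)) (l : Fin j), (l : ℕ) + p < (i : ℕ) → H i l = 0) :
    (H.submatrix (Fin.castAdd p) id).IsSymm ∧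
      ∀ (i : Fin (j + p)) (l : Fin j), (i : ℕ) + p < (l : ℕ) → H i l = 0 := by
  set Uj : Matrix (Fin n) (Fin j) ℝ := U.submatrix id (Fin.castAdd p) with hUj
  have hH2 : H = Uᵀ * (A * Uj) := by
    rw [hH, ← Matrix.mul_assoc, hU, Matrix.one_mul]
  have hsub : H.submatrix (Fin.castAdd p) id = Ujᵀ * (A * Uj) := by
    ext a b
    simp [hH2, Matrix.mul_apply, Matrix.submatrix, hUj, Matrix.transpose_apply]
  have hsymm : (H.submatrix (Fin.castAdd p) id).IsSymm := by
    rw [hsub]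
    unfold Matrix.IsSymm
    rw [← Matrix.mul_assoc, Matrix.transpose_mul, Matrix.transpose_mul,
      Matrix.transpose_transpose, hA, Matrix.mul_assoc]
  refine ⟨hsymm, fun i l hil => ?_⟩
  have hi : (i : ℕ) < j := lt_of_le_of_lt (Nat.le_add_right _ _) (lt_of_lt_of_le hil l.2.le)
  set i' : Fin j := ⟨i, hi⟩ with hi'
  have hicast : i = Fin.castAdd p i' := by
    apply Fin.ext; simp [hi']
  have hval : H (Fin.castAdd p i') l = H (Fin.castAdd p l) i' := by
    have h := congrFun (congrFun hsymm l) i'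
    simpa [Matrix.transpose_apply, Matrix.submatrix_apply] using h
  rw [hicast, hval]
  exact hband _ _ (by simpa [hi'] using hil)
end

section
/- Let H be a (j+p)×j real matrix of full column rank j that is banded with bandwidth p, i.e. H_{i,ℓ} = 0 whenever |i − ℓ| > p. Suppose H = Q R̄ where Q is a (j+p)×(j+p) orthogonal matrix and R̄ = [R; 0_{p×j}] with R ∈ ℝ^{j×j} upper triangular with strictly positive diagonal entries. Then R has at most 2p nonzero superdiagonals per column: R_{i,ℓ} = 0 whenever ℓ > i + 2p. -/
/-!
An orthogonal factor drops out of the Gram matrix, so `Rᵀ R = Hᵀ H`, and the Gram matrix of a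
matrix of bandwidth `p` has bandwidth `2p`. Reading `Rᵀ R` row by row from the top, entry
`(i, ℓ)` equals `R i i * R i ℓ` once the rows above `i` are known to vanish beyond the band, so a
nonzero diagonal forces `R i ℓ = 0` for `ℓ > i + 2p`.
-/

open Matrix

namespace Matrix

theorem transpose_mul_mul_self_of_transpose_mul_eq_one {m n α : Type*} [Fintype m]
    [DecidableEq m] [CommSemiring α] {Q : Matrix m m α} (hQ : Qᵀ * Q = 1) (A : Matrix m n α) :
    (Q * A)ᵀ * (Q * A) = Aᵀ * A := by
  rw [transpose_mul, Matrix.mul_assoc, ← Matrix.mul_assoc Qᵀ, hQ, Matrix.one_mul]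

theorem transpose_mul_self_eq_of_top_bottom {n α : Type*} [NonUnitalNonAssocSemiring α]
    {m k : ℕ} {Rbar : Matrix (Fin (m + k)) n α} {R : Matrix (Fin m) n α}
    (htop : ∀ i, Rbar (Fin.castAdd k i) = R i) (hbottom : ∀ i, Rbar (Fin.natAdd m i) = 0) :
    Rbarᵀ * Rbar = Rᵀ * R := by
  ext a b
  simp [mul_apply, Fin.sum_univ_add, htop, hbottom]

theorem transpose_mul_apply_eq_zero_of_band {α : Type*} [NonUnitalNonAssocSemiring α]
    {m n n' p q : ℕ} {A : Matrix (Fin m) (Fin n) α} {B : Matrix (Fin m) (Fin n') α}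
    (hA : ∀ (k : Fin m) (i : Fin n), (p : ℤ) < |(k : ℤ) - (i : ℤ)| → A k i = 0)
    (hB : ∀ (k : Fin m) (l : Fin n'), (q : ℤ) < |(k : ℤ) - (l : ℤ)| → B k l = 0)
    {i : Fin n} {l : Fin n'} (hil : (i : ℕ) + (p + q) < l) : (Aᵀ * B) i l = 0 := by
  rw [mul_apply]
  refine Finset.sum_eq_zero fun k _ => ?_
  by_cases hki : (p : ℤ) < |(k : ℤ) - (i : ℤ)|
  · rw [transpose_apply, hA k i hki, zero_mul]
  · have hki' := (abs_le.mp (not_lt.mp hki)).2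
    rw [hB k l (lt_abs.mpr (Or.inr (by omega))), mul_zero]

theorem apply_eq_zero_of_transpose_mul_self_apply_eq_zero {α : Type*}
    [NonUnitalNonAssocSemiring α] [NoZeroDivisors α] {n b : ℕ} {R : Matrix (Fin n) (Fin n) α}
    (htri : ∀ i l : Fin n, (l : ℕ) < i → R i l = 0) (hdiag : ∀ i, R i i ≠ 0)
    (hgram : ∀ i l : Fin n, (i : ℕ) + b < l → (Rᵀ * R) i l = 0) :
    ∀ i l : Fin n, (i : ℕ) + b < l → R i l = 0 := by
  intro i
  induction i using WellFoundedLT.induction with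
  | ind i ih =>
    intro l hil
    have hgram_entry : (Rᵀ * R) i l = R i i * R i l := by
      rw [mul_apply]
      refine Finset.sum_eq_single i (fun k _ hki => ?_) (absurd (Finset.mem_univ i))
      rcases lt_or_gt_of_ne hki with hk | hk
      · rw [ih k hk l (by omega), mul_zero]
      · rw [transpose_apply, htri k i hk, zero_mul]
    exact (mul_eq_zero.mp (hgram_entry ▸ hgram i l hil)).resolve_left (hdiag i)

end Matrix

theorem qr_band_structure_general {j p : ℕ} (H : Matrix (Fin (j + p)) (Fin j) ℝ)
    (hband : ∀ (i : Fin (j + p)) (l : Fin j), (p : ℤ) < |(i : ℤ) - (l : ℤ)| → H i l = 0)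
    (Q : Matrix (Fin (j + p)) (Fin (j + p)) ℝ) (hQ : Qᵀ * Q = 1)
    (R : Matrix (Fin j) (Fin j) ℝ)
    (hRtri : ∀ i l : Fin j, (l : ℕ) < (i : ℕ) → R i l = 0)
    (hRdiag : ∀ i : Fin j, 0 < R i i)
    (Rbar : Matrix (Fin (j + p)) (Fin j) ℝ)
    (hRbar : Rbar = fun (i : Fin (j + p)) (l : Fin j) =>
      if h : (i : ℕ) < j then R ⟨(i : ℕ), h⟩ l else 0)
    (hQR : H = Q * Rbar) :
    ∀ i l : Fin j, (i : ℕ) + 2 * p < (l : ℕ) → R i l = 0 := by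
  have hgram : Hᵀ * H = Rᵀ * R := by
    rw [hQR, transpose_mul_mul_self_of_transpose_mul_eq_one hQ]
    exact transpose_mul_self_eq_of_top_bottom (by simp [hRbar]) fun _ => by ext; simp [hRbar]
  refine apply_eq_zero_of_transpose_mul_self_apply_eq_zero hRtri (fun i => (hRdiag i).ne')
    fun i l hil => ?_
  rw [← hgram]
  exact transpose_mul_apply_eq_zero_of_band hband hband (by omega)

/-- The upper triangular factor in a QR factorization of a full-rank banded matrix with
bandwidth `p` has at most `2p` nonzero superdiagonals: `R_{i,ℓ} = 0` whenever
`ℓ > i + 2p`. -/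
theorem qr_band_structure {j p : ℕ} (H : Matrix (Fin (j + p)) (Fin j) ℝ)
    (hrank : H.rank = j)
    (hband : ∀ (i : Fin (j + p)) (l : Fin j), (p : ℤ) < |(i : ℤ) - (l : ℤ)| → H i l = 0)
    (Q : Matrix (Fin (j + p)) (Fin (j + p)) ℝ) (hQ : Qᵀ * Q = 1)
    (R : Matrix (Fin j) (Fin j) ℝ)
    (hRtri : ∀ i l : Fin j, (l : ℕ) < (i : ℕ) → R i l = 0)
    (hRdiag : ∀ i : Fin j, 0 < R i i)
    (Rbar : Matrix (Fin (j + p)) (Fin j) ℝ)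
    (hRbar : Rbar = fun (i : Fin (j + p)) (l : Fin j) =>
      if h : (i : ℕ) < j then R ⟨(i : ℕ), h⟩ l else 0)
    (hQR : H = Q * Rbar) :
    ∀ i l : Fin j, (i : ℕ) + 2 * p < (l : ℕ) → R i l = 0 :=
  qr_band_structure_general H hband Q hQ R hRtri hRdiag Rbar hRbar hQR
end

section
/- Let A be an n×n real matrix and let u_1, …, u_{j+p} be orthonormal vectors in ℝⁿ such that for each 1 ≤ ℓ ≤ j there exist real scalars h_{i,ℓ} with A u_ℓ = Σ_{i=1}^{ℓ+p} h_{i,ℓ} u_i and h_{ℓ+p,ℓ} ≠ 0 (no breakdown in the banded Lanczos process). Write j = (k−1)p + m with k ≥ 1 and 0 ≤ m < p, and let F be the n×p matrix with columns u_1,…,u_p. Then span{u_1, …, u_{j+p}} = K_{k,m}(A, F). -/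
/-!
Write `U_t` for the span of `u_0, …, u_{t-1}` and `K_t` for the span of the first `t` vectors of
the block Krylov sequence `u_0, …, u_{p-1}, A u_0, …, A u_{p-1}, A² u_0, …`. Multiplication by `A`
shifts both chains by `p`: `A K_t ⊆ K_{t+p}` always, and `A U_t ⊆ U_{t+p}` by the banded
recurrence, which gives `K_t ⊆ U_t`. Conversely, since `h_{l+p,l} ≠ 0` the recurrence can be
solved for `u_{l+p}` in terms of `A u_l` and earlier `u_i`, so `U_t ⊆ K_t` by strong induction.
Finally, the first `k p + m` block Krylov vectors are the `A^a f_q` with `a ≤ k` for `q < m` and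
`a < k` otherwise, which is `K_{k,m}(A, F)`.
-/
open Matrix

/-- The Krylov subspace `K_k(A,v) = span {v, Av, …, A^{k-1} v}`. -/
def krylov {n : ℕ} (A : Matrix (Fin n) (Fin n) ℝ) (v : Fin n → ℝ) (k : ℕ) :
    Submodule ℝ (Fin n → ℝ) :=
  Submodule.span ℝ {x | ∃ i < k, x = (A ^ i).mulVec v}

/-- The banded Krylov subspace
`K_{k,m}(A,F) = Σ_{ℓ=1}^{m} K_{k+1}(A,f_ℓ) + Σ_{ℓ=m+1}^{p} K_k(A,f_ℓ)`
(columns of `F` are zero-indexed here). -/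
def bandedKrylov {n p : ℕ} (A : Matrix (Fin n) (Fin n) ℝ) (F : Matrix (Fin n) (Fin p) ℝ)
    (k m : ℕ) : Submodule ℝ (Fin n → ℝ) :=
  ⨆ l : Fin p, krylov A (fun r => F r l) (if (l : ℕ) < m then k + 1 else k)

open Submodule

section BlockKrylov

variable {K V : Type*} [Semiring K] [AddCommMonoid V] [Module K V] {p : ℕ}

/-- Span of the first `t` terms of `f 0, …, f (p-1), T (f 0), …, T (f (p-1)), T² (f 0), …`,
in which `(T ^ a) (f q)` sits at position `a * p + q`. -/
def blockKrylov (T : Module.End K V) (f : Fin p → V) (t : ℕ) : Submodule K V :=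
  span K {x | ∃ (a : ℕ) (q : Fin p), a * p + q < t ∧ (T ^ a) (f q) = x}

variable {T : Module.End K V} {f : Fin p → V}

lemma blockKrylov_mono : Monotone (blockKrylov T f) := fun _ _ hst =>
  span_mono fun _ ⟨a, q, hlt, hx⟩ => ⟨a, q, hlt.trans_le hst, hx⟩

lemma pow_apply_mem_blockKrylov {a t : ℕ} {q : Fin p} (h : a * p + q < t) :
    (T ^ a) (f q) ∈ blockKrylov T f t :=
  subset_span ⟨a, q, h, rfl⟩

lemma map_blockKrylov_le (t : ℕ) : (blockKrylov T f t).map T ≤ blockKrylov T f (t + p) := by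
  rw [blockKrylov, map_span_le]
  rintro _ ⟨a, q, hlt, rfl⟩
  rw [← Module.End.mul_apply, ← pow_succ']
  exact pow_apply_mem_blockKrylov (by rw [add_one_mul]; omega)

end BlockKrylov

section PrefixSpan

variable (K : Type*) {V : Type*} [Semiring K] [AddCommMonoid V] [Module K V] {N : ℕ}
  (u : Fin N → V)

def prefixSpan (t : ℕ) : Submodule K V := span K (u '' {i | (i : ℕ) < t})

variable {u}

lemma prefixSpan_mono : Monotone (prefixSpan K u) := fun _ _ hst =>
  span_mono (Set.image_mono fun _ (hi : _ < _) => hi.trans_le hst)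

lemma mem_prefixSpan {i : Fin N} {t : ℕ} (h : (i : ℕ) < t) : u i ∈ prefixSpan K u t :=
  subset_span ⟨i, h, rfl⟩

variable (u) in
lemma prefixSpan_self : prefixSpan K u N = span K (Set.range u) := by
  rw [prefixSpan, ← Set.image_univ]
  congr
  ext i
  simp

end PrefixSpan

section Lanczos

variable {K V : Type*} [DivisionRing K] [AddCommGroup V] [Module K V] {N p : ℕ}

/-- The banded Lanczos recurrence without breakdown: `T u_l ≡ c u_{l+p}` modulo
`span {u_0, …, u_{l+p-1}}` for some `c ≠ 0`. -/
def IsBandLanczos (T : Module.End K V) (p : ℕ) (u : Fin N → V) : Prop :=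
  ∀ l t : Fin N, (t : ℕ) = l + p → ∃ c : K, c ≠ 0 ∧ T (u l) - c • u t ∈ prefixSpan K u t

namespace IsBandLanczos

variable {T : Module.End K V} {u : Fin N → V}

lemma apply_mem_prefixSpan (hu : IsBandLanczos T p u) {l t : Fin N} (ht : (t : ℕ) = l + p) :
    T (u l) ∈ prefixSpan K u (t + 1) := by
  obtain ⟨c, -, hc⟩ := hu l t ht
  rw [← sub_add_cancel (T (u l)) (c • u t)]
  exact add_mem (prefixSpan_mono K (Nat.le_succ _) hc)
    (smul_mem _ _ (mem_prefixSpan K (Nat.lt_succ_self t)))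

lemma map_prefixSpan_le (hu : IsBandLanczos T p u) {t : ℕ} (h : t + p ≤ N) :
    (prefixSpan K u t).map T ≤ prefixSpan K u (t + p) := by
  rw [prefixSpan, map_span_le]
  rintro _ ⟨i, hi : (i : ℕ) < t, rfl⟩
  have hT := hu.apply_mem_prefixSpan (t := ⟨i + p, by omega⟩) rfl
  exact prefixSpan_mono K (by simp only; omega) hT

lemma map_pow_prefixSpan_le (hu : IsBandLanczos T p u) {t a : ℕ} (h : t + a * p ≤ N) :
    (prefixSpan K u t).map (T ^ a) ≤ prefixSpan K u (t + a * p) := by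
  induction a generalizing t with
  | zero => simp [Module.End.one_eq_id]
  | succ a ih =>
    have h' : t + p + a * p ≤ N := by rw [add_one_mul] at h; omega
    rw [pow_succ, Module.End.mul_eq_comp, map_comp, show t + (a + 1) * p = t + p + a * p by ring]
    exact (map_mono (hu.map_prefixSpan_le (by omega))).trans (ih h')

lemma blockKrylov_le_prefixSpan (hu : IsBandLanczos T p u) (hpN : p ≤ N) {t : ℕ}
    (ht : t ≤ N) : blockKrylov T (fun q => u (Fin.castLE hpN q)) t ≤ prefixSpan K u t := by
  rw [blockKrylov, span_le]
  rintro _ ⟨a, q, hlt, rfl⟩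
  have hq : u (Fin.castLE hpN q) ∈ prefixSpan K u (q + 1) :=
    mem_prefixSpan K (Nat.lt_succ_self _)
  exact prefixSpan_mono K (by omega)
    (hu.map_pow_prefixSpan_le (a := a) (by omega) (mem_map_of_mem hq))

lemma mem_blockKrylov (hu : IsBandLanczos T p u) (hp : 0 < p) (hpN : p ≤ N) (i : Fin N) :
    u i ∈ blockKrylov T (fun q => u (Fin.castLE hpN q)) (i + 1) := by
  induction i using WellFoundedLT.induction with
  | _ i ih =>
    by_cases hip : (i : ℕ) < p
    · simpa using pow_apply_mem_blockKrylov (T := T) (f := fun q => u (Fin.castLE hpN q))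
        (a := 0) (q := ⟨i, hip⟩) (by simp)
    · set l : Fin N := ⟨i - p, by have := i.isLt; omega⟩
      have hl : (i : ℕ) = l + p := by simp only [l]; omega
      obtain ⟨c, hc, hdiff⟩ := hu l i hl
      have hTl : T (u l) ∈ blockKrylov T (fun q => u (Fin.castLE hpN q)) (i + 1) := by
        rw [hl, add_right_comm]
        exact map_blockKrylov_le _ (mem_map_of_mem (ih l (by simp [Fin.lt_def, l]; omega)))
      have hprev : prefixSpan K u i ≤ blockKrylov T (fun q => u (Fin.castLE hpN q)) (i + 1) := by
        rw [prefixSpan, span_le]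
        rintro _ ⟨i', hi' : (i' : ℕ) < i, rfl⟩
        exact blockKrylov_mono (by omega) (ih i' hi')
      rw [← inv_smul_smul₀ hc (u i), ← sub_sub_cancel (T (u l)) (c • u i)]
      exact smul_mem _ _ (sub_mem hTl (hprev hdiff))

lemma prefixSpan_le_blockKrylov (hu : IsBandLanczos T p u) (hp : 0 < p) (hpN : p ≤ N) (t : ℕ) :
    prefixSpan K u t ≤ blockKrylov T (fun q => u (Fin.castLE hpN q)) t := by
  rw [prefixSpan, span_le]
  rintro _ ⟨i, hi : (i : ℕ) < t, rfl⟩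
  exact blockKrylov_mono hi (hu.mem_blockKrylov hp hpN i)

lemma blockKrylov_eq_prefixSpan (hu : IsBandLanczos T p u) (hp : 0 < p) (hpN : p ≤ N)
    {t : ℕ} (ht : t ≤ N) : blockKrylov T (fun q => u (Fin.castLE hpN q)) t = prefixSpan K u t :=
  le_antisymm (hu.blockKrylov_le_prefixSpan hpN ht) (hu.prefixSpan_le_blockKrylov hp hpN t)

end IsBandLanczos

lemma isBandLanczos_of_recurrence {j : ℕ} (T : Module.End K V) (u : Fin (j + p) → V)
    (hrec : ∀ l : Fin j, ∃ h : Fin (j + p) → K,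
      T (u (Fin.castAdd p l)) =
          ∑ i ∈ Finset.univ.filter (fun i : Fin (j + p) => (i : ℕ) ≤ (l : ℕ) + p), h i • u i ∧
        h ⟨(l : ℕ) + p, by omega⟩ ≠ 0) :
    IsBandLanczos T p u := by
  intro l t ht
  obtain ⟨h, hsum, hne⟩ := hrec ⟨l, by omega⟩
  have hlt : Fin.castAdd p ⟨l, by omega⟩ = l := rfl
  have htl : (⟨(l : ℕ) + p, by omega⟩ : Fin (j + p)) = t := Fin.ext ht.symm
  refine ⟨h t, htl ▸ hne, ?_⟩
  have hmem : t ∈ Finset.univ.filter (fun i : Fin (j + p) => (i : ℕ) ≤ (l : ℕ) + p) := by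
    simp [ht]
  rw [hlt] at hsum
  rw [hsum, ← Finset.add_sum_erase _ _ hmem, add_sub_cancel_left]
  refine sum_mem fun i hi => smul_mem _ _ (mem_prefixSpan K ?_)
  simp only [Finset.mem_erase, Finset.mem_filter] at hi
  exact lt_of_le_of_ne (ht ▸ hi.2.2) (Fin.val_ne_of_ne hi.1)

end Lanczos

lemma mul_add_lt_mul_add_iff {a k p q m : ℕ} (hq : q < p) (hm : m ≤ p) :
    a * p + q < k * p + m ↔ a < if q < m then k + 1 else k := by
  split_ifs <;> constructor <;> intro h <;> by_contra! h' <;> nlinarith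

lemma blockKrylov_toLin'_eq_bandedKrylov {n p : ℕ} (k : ℕ) {m : ℕ} (hm : m ≤ p)
    (A : Matrix (Fin n) (Fin n) ℝ) (F : Matrix (Fin n) (Fin p) ℝ) :
    blockKrylov (toLin' A) (fun q r => F r q) (k * p + m) = bandedKrylov A F k m := by
  rw [bandedKrylov, blockKrylov]
  simp only [krylov, iSup_span]
  congr 1
  ext x
  simp [mul_add_lt_mul_add_iff _ hm, ← toLin'_pow, eq_comm]
  exact exists_comm

/-- If `u_1, …, u_{j+p}` are orthonormal vectors satisfying the banded Lanczos recurrences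
`A u_ℓ = Σ_{i=1}^{ℓ+p} h_{i,ℓ} u_i` with `h_{ℓ+p,ℓ} ≠ 0` for all `ℓ ≤ j` (no breakdown),
and `j = (k-1)p + m` with `k ≥ 1`, `0 ≤ m < p`, then the vectors `u_1, …, u_{j+p}` span the
banded Krylov subspace `K_{k,m}(A, F)` where `F` has columns `u_1, …, u_p`. -/
theorem banded_lanczos_span {n j p k m : ℕ} (hk : 1 ≤ k) (hm : m < p)
    (hj : j = (k - 1) * p + m)
    (A : Matrix (Fin n) (Fin n) ℝ) (u : Fin (j + p) → Fin n → ℝ)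
    (hrec : ∀ l : Fin j, ∃ h : Fin (j + p) → ℝ,
      A.mulVec (u (Fin.castAdd p l)) =
          ∑ i ∈ Finset.univ.filter (fun i : Fin (j + p) => (i : ℕ) ≤ (l : ℕ) + p),
            h i • u i ∧
        h ⟨(l : ℕ) + p, by omega⟩ ≠ 0) :
    Submodule.span ℝ (Set.range u) =
      bandedKrylov A (Matrix.of fun r (l : Fin p) => u (Fin.castLE (by omega) l) r) k m := by
  have hN : j + p = k * p + m := by
    obtain ⟨k, rfl⟩ : ∃ k', k = k' + 1 := ⟨k - 1, by omega⟩
    subst hj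
    simp only [Nat.add_sub_cancel]
    ring
  have hu : IsBandLanczos (toLin' A) p u := isBandLanczos_of_recurrence _ u hrec
  calc span ℝ (Set.range u) = prefixSpan ℝ u (j + p) := (prefixSpan_self ℝ u).symm
    _ = blockKrylov (toLin' A) (fun q => u (Fin.castLE (by omega) q)) (j + p) :=
      (hu.blockKrylov_eq_prefixSpan (by omega) (Nat.le_add_left p j) le_rfl).symm
    _ = _ := (congrArg _ hN).trans (blockKrylov_toLin'_eq_bandedKrylov k hm.le A _)
end
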